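/- Let X : [a,b] → Sp(2n) be a C¹ path and A ∈ Sp(2n) a symplectic matrix having at least one eigenvalue λ ∈ ℂ with |λ| = 1. Then the path t ↦ X(t)⁻¹ A X(t) is not a positive path. Concretely, writing X'(t) = J Y(t) X(t) with Y(t) symmetric, the symmetric matrix X(t)ᵀ(−Y(t) + A⁻ᵀ Y(t) A⁻¹) X(t) governing the derivative satisfies ⟨(−Y + A⁻ᵀYA⁻¹)v, v⟩ = (|λ|² − 1)⟨Yv, v⟩ = 0 for any eigenvector v of A with eigenvalue λ, |λ| = 1, hence it cannot be positive definite. -/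

import Mathlib

/-! Let `M = X⁻¹AX`. Differentiating `X M = A X` with `X' = JYX` and `M' = JPM`, and using that
`X` and `A` are symplectic (`XJXᵀ = J`, `J A⁻ᵀ = AJ`), forces `P = Xᵀ(−Y + A⁻ᵀYA⁻¹)X`.
If `Av = λv` with `|λ| = 1`, then `A⁻¹v = λ⁻¹v`, so the Hermitian form of `A⁻ᵀYA⁻¹` at `v` is
`|λ|⁻²⟨Yv, v⟩ = ⟨Yv, v⟩`; hence the form of `P` vanishes at `X⁻¹v ≠ 0`. -/

open Matrix Set

noncomputable section

def J2 : Matrix (Fin 2) (Fin 2) ℝ := !![0, -1; 1, 0]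

/-- The standard symplectic matrix `J = diag(J₂, …, J₂)`. -/
def Jn (n : ℕ) : Matrix (Fin 2 × Fin n) (Fin 2 × Fin n) ℝ :=
  Matrix.blockDiagonal fun _ => J2

def IsSymplectic {n : ℕ} (B : Matrix (Fin 2 × Fin n) (Fin 2 × Fin n) ℝ) : Prop :=
  Bᵀ * Jn n * B = Jn n

section Symplectic

variable {n : ℕ} {B : Matrix (Fin 2 × Fin n) (Fin 2 × Fin n) ℝ}

theorem J2_transpose : J2ᵀ = -J2 := by
  ext i j
  fin_cases i <;> fin_cases j <;> simp [J2]

theorem J2_mul_J2 : J2 * J2 = -1 := by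
  ext i j
  fin_cases i <;> fin_cases j <;> simp [J2, Matrix.mul_apply]

theorem Jn_transpose : (Jn n)ᵀ = -Jn n := by
  rw [Jn, blockDiagonal_transpose]
  simp_rw [J2_transpose]
  exact blockDiagonal_neg _

theorem Jn_mul_Jn : Jn n * Jn n = -1 := by
  rw [Jn, ← blockDiagonal_mul]
  simp_rw [J2_mul_J2]
  exact (blockDiagonal_neg _).trans (congrArg Neg.neg blockDiagonal_one)

theorem isUnit_Jn : IsUnit (Jn n) :=
  (isUnit_iff_isUnit_det _).mpr (isUnit_det_of_left_inverse (B := -Jn n) (by simp [Jn_mul_Jn]))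

theorem IsSymplectic.left_inv (h : IsSymplectic B) : -(Jn n * Bᵀ * Jn n) * B = 1 := by
  rw [neg_mul, Matrix.mul_assoc, Matrix.mul_assoc, ← Matrix.mul_assoc _ _ B, h, Jn_mul_Jn, neg_neg]

theorem IsSymplectic.inv_eq (h : IsSymplectic B) : B⁻¹ = -(Jn n * Bᵀ * Jn n) :=
  inv_eq_left_inv h.left_inv

theorem IsSymplectic.isUnit (h : IsSymplectic B) : IsUnit B :=
  (isUnit_iff_isUnit_det B).mpr (isUnit_det_of_left_inverse h.left_inv)

theorem IsSymplectic.Jn_mul_transpose (h : IsSymplectic B) : Jn n * Bᵀ = B⁻¹ * Jn n := by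
  rw [h.inv_eq, neg_mul, Matrix.mul_assoc _ (Jn n), Jn_mul_Jn]
  simp

theorem IsSymplectic.mul_Jn_mul_transpose (h : IsSymplectic B) : B * Jn n * Bᵀ = Jn n := by
  rw [Matrix.mul_assoc, h.Jn_mul_transpose, ← Matrix.mul_assoc,
    mul_nonsing_inv _ ((isUnit_iff_isUnit_det B).mp h.isUnit), Matrix.one_mul]

theorem IsSymplectic.Jn_mul_inv_transpose (h : IsSymplectic B) : Jn n * B⁻¹ᵀ = B * Jn n := by
  have := congrArg transpose h.Jn_mul_transpose
  rw [transpose_mul, transpose_mul, transpose_transpose, Jn_transpose, mul_neg, neg_mul,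
    neg_inj] at this
  exact this.symm

end Symplectic

section Complexification

variable {ι κ : Type*}

theorem map_ofReal_mul {μ : Type*} [Fintype κ] (M : Matrix ι κ ℝ) (N : Matrix κ μ ℝ) :
    (M * N).map Complex.ofReal = M.map Complex.ofReal * N.map Complex.ofReal :=
  Matrix.map_mul (f := Complex.ofRealHom)

theorem map_ofReal_conjTranspose (M : Matrix ι κ ℝ) :
    (M.map Complex.ofReal)ᴴ = Mᵀ.map Complex.ofReal := by
  ext i j
  simp

theorem star_dotProduct_map_ofReal_transpose_mul_mul_mulVec [Fintype ι] [Fintype κ]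
    (B : Matrix ι κ ℝ) (Q : Matrix ι ι ℝ) (v : κ → ℂ) :
    star v ⬝ᵥ ((Bᵀ * Q * B).map Complex.ofReal *ᵥ v)
      = star (B.map Complex.ofReal *ᵥ v)
          ⬝ᵥ (Q.map Complex.ofReal *ᵥ (B.map Complex.ofReal *ᵥ v)) := by
  rw [map_ofReal_mul, map_ofReal_mul, ← mulVec_mulVec, ← mulVec_mulVec, dotProduct_mulVec,
    star_mulVec, map_ofReal_conjTranspose]

theorem re_star_dotProduct_map_ofReal_mulVec [Fintype ι] (P : Matrix ι ι ℝ) (v : ι → ℂ) :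
    (star v ⬝ᵥ (P.map Complex.ofReal *ᵥ v)).re
      = (fun i => (v i).re) ⬝ᵥ (P *ᵥ fun i => (v i).re)
        + (fun i => (v i).im) ⬝ᵥ (P *ᵥ fun i => (v i).im) := by
  simp only [dotProduct, mulVec, Pi.star_apply, map_apply, Complex.re_sum, Complex.mul_re,
    Complex.star_def, Complex.conj_re, Complex.conj_im, Complex.im_ofReal_mul, Finset.mul_sum,
    ← Finset.sum_add_distrib]
  refine Finset.sum_congr rfl fun i _ => Finset.sum_congr rfl fun j _ => ?_
  simp only [Complex.ofReal_re, Complex.ofReal_im]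
  ring

theorem Matrix.PosDef.re_star_dotProduct_map_ofReal_mulVec_pos [Fintype ι] {P : Matrix ι ι ℝ}
    (hP : P.PosDef) {v : ι → ℂ} (hv : v ≠ 0) :
    0 < (star v ⬝ᵥ (P.map Complex.ofReal *ᵥ v)).re := by
  rw [re_star_dotProduct_map_ofReal_mulVec]
  have hre := hP.posSemidef.dotProduct_mulVec_nonneg fun i => (v i).re
  have him := hP.posSemidef.dotProduct_mulVec_nonneg fun i => (v i).im
  simp only [star_trivial] at hre him
  by_cases h : (fun i => (v i).re) = 0
  · have h' : (fun i => (v i).im) ≠ 0 := fun h' =>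
      hv (funext fun i => Complex.ext (congrFun h i) (congrFun h' i))
    simpa [h] using hP.dotProduct_mulVec_pos h'
  · have := hP.dotProduct_mulVec_pos h
    simp only [star_trivial] at this
    linarith

end Complexification

section Eigen

variable {ι : Type*} [Fintype ι] [DecidableEq ι]

theorem mulVec_eq_inv_smul_of_mul_eq_one {K : Type*} [Field K] {M N : Matrix ι ι K}
    (hNM : N * M = 1) {c : K} (hc : c ≠ 0) {v : ι → K} (hv : M *ᵥ v = c • v) :
    N *ᵥ v = c⁻¹ • v := by
  have h : c • (N *ᵥ v) = v := by rw [← mulVec_smul, ← hv, mulVec_mulVec, hNM, one_mulVec]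
  rw [← h, smul_smul, inv_mul_cancel₀ hc, one_smul, h]

theorem star_dotProduct_map_ofReal_mulVec_eq_zero_of_norm_eigenvalue_eq_one {A : Matrix ι ι ℝ}
    (hA : IsUnit A) {lam : ℂ} (hlam : ‖lam‖ = 1) {v : ι → ℂ}
    (hv : A.map Complex.ofReal *ᵥ v = lam • v) (Y : Matrix ι ι ℝ) :
    star v ⬝ᵥ ((-Y + A⁻¹ᵀ * Y * A⁻¹).map Complex.ofReal *ᵥ v) = 0 := by
  have hinv : A⁻¹.map Complex.ofReal *ᵥ v = lam⁻¹ • v := by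
    refine mulVec_eq_inv_smul_of_mul_eq_one ?_ (norm_ne_zero_iff.mp (hlam ▸ one_ne_zero)) hv
    rw [← map_ofReal_mul, nonsing_inv_mul _ ((isUnit_iff_isUnit_det A).mp hA)]
    exact Matrix.map_one _ Complex.ofReal_zero Complex.ofReal_one
  have hunit : star lam⁻¹ * lam⁻¹ = 1 := by
    rw [Complex.star_def, Complex.conj_mul', norm_inv, hlam]
    norm_num
  have hmap : (-Y + A⁻¹ᵀ * Y * A⁻¹).map Complex.ofReal
      = -Y.map Complex.ofReal + (A⁻¹ᵀ * Y * A⁻¹).map Complex.ofReal := by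
    ext i j
    simp
  rw [hmap, add_mulVec, neg_mulVec, dotProduct_add, dotProduct_neg,
    star_dotProduct_map_ofReal_transpose_mul_mul_mulVec, hinv, mulVec_smul, star_smul,
    smul_dotProduct, dotProduct_smul, smul_smul, smul_eq_mul, hunit, one_mul, neg_add_cancel]

end Eigen

section Derivative

open Filter Topology

variable {ι κ μ : Type*} {t : ℝ}

theorem hasDerivAt_matrix_mul_apply [Fintype κ] {F : ℝ → Matrix ι κ ℝ} {G : ℝ → Matrix κ μ ℝ}
    {F' : Matrix ι κ ℝ} {G' : Matrix κ μ ℝ}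
    (hF : ∀ i j, HasDerivAt (fun s => F s i j) (F' i j) t)
    (hG : ∀ i j, HasDerivAt (fun s => G s i j) (G' i j) t) (i : ι) (j : μ) :
    HasDerivAt (fun s => (F s * G s) i j) ((F' * G t + F t * G') i j) t := by
  simp only [mul_apply, Matrix.add_apply, ← Finset.sum_add_distrib]
  exact HasDerivAt.fun_sum fun k _ => (hF i k).mul (hG k j)

theorem eventually_isUnit_of_continuousAt [Fintype ι] [DecidableEq ι] {X : ℝ → Matrix ι ι ℝ}
    (hX : ∀ i j, ContinuousAt (fun s => X s i j) t) (hXt : IsUnit (X t)) :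
    ∀ᶠ s in 𝓝 t, IsUnit (X s) := by
  have hdet : ContinuousAt (fun s => (X s).det) t :=
    continuous_id.matrix_det.continuousAt.comp
      (continuousAt_pi.2 fun i => continuousAt_pi.2 (hX i))
  simp only [isUnit_iff_isUnit_det, isUnit_iff_ne_zero] at hXt ⊢
  exact hdet.eventually_ne hXt

theorem mul_add_mul_eq_of_hasDerivAt_inv_mul_mul [Fintype ι] [DecidableEq ι]
    {X : ℝ → Matrix ι ι ℝ} {A X' M' : Matrix ι ι ℝ}
    (hX : ∀ i j, HasDerivAt (fun s => X s i j) (X' i j) t)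
    (hXt : IsUnit (X t)) (hM : ∀ i j, HasDerivAt (fun s => ((X s)⁻¹ * A * X s) i j) (M' i j) t) :
    X' * ((X t)⁻¹ * A * X t) + X t * M' = A * X' := by
  have hXM : ∀ᶠ s in 𝓝 t, X s * ((X s)⁻¹ * A * X s) = A * X s := by
    filter_upwards [eventually_isUnit_of_continuousAt (fun i j => (hX i j).continuousAt) hXt]
      with s hs
    rw [← Matrix.mul_assoc, ← Matrix.mul_assoc,
      mul_nonsing_inv _ ((isUnit_iff_isUnit_det _).mp hs), Matrix.one_mul]
  ext i j
  have hAX := hasDerivAt_matrix_mul_apply (G' := X') (F' := 0)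
    (fun i j => hasDerivAt_const t (A i j)) hX i j
  rw [Matrix.zero_mul, zero_add] at hAX
  refine (hasDerivAt_matrix_mul_apply hX hM i j).unique (hAX.congr_of_eventuallyEq ?_)
  filter_upwards [hXM] with s hs
  rw [hs]

end Derivative

theorem eq_transpose_mul_mul_of_conj_deriv {n : ℕ}
    {A X Y P : Matrix (Fin 2 × Fin n) (Fin 2 × Fin n) ℝ} (hA : IsSymplectic A) (hX : IsSymplectic X)
    (h : Jn n * Y * X * (X⁻¹ * A * X) + X * (Jn n * P * (X⁻¹ * A * X)) = A * (Jn n * Y * X)) :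
    P = Xᵀ * (-Y + A⁻¹ᵀ * Y * A⁻¹) * X := by
  have hXdet := (isUnit_iff_isUnit_det X).mp hX.isUnit
  have hXM : X * (X⁻¹ * A * X) = A * X := by
    rw [← Matrix.mul_assoc, ← Matrix.mul_assoc, mul_nonsing_inv _ hXdet, Matrix.one_mul]
  have hMu : IsUnit (X⁻¹ * A * X) :=
    ((isUnit_nonsing_inv_iff.mpr hX.isUnit).mul hA.isUnit).mul hX.isUnit
  have hP : X * (Jn n * P * (X⁻¹ * A * X)) = A * (Jn n * Y * X) - Jn n * Y * (A * X) := by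
    rw [eq_sub_of_add_eq' h, Matrix.mul_assoc _ X, hXM]
  have hQ : X * (Jn n * (Xᵀ * (-Y + A⁻¹ᵀ * Y * A⁻¹) * X) * (X⁻¹ * A * X))
      = A * (Jn n * Y * X) - Jn n * Y * (A * X) := by
    calc _ = X * Jn n * Xᵀ * (-Y + A⁻¹ᵀ * Y * A⁻¹) * (X * (X⁻¹ * A * X)) := by
          simp only [Matrix.mul_assoc]
      _ = -(Jn n * Y * (A * X)) + Jn n * A⁻¹ᵀ * Y * (A⁻¹ * (A * X)) := by
          rw [hX.mul_Jn_mul_transpose, hXM]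
          simp only [Matrix.mul_add, Matrix.add_mul, Matrix.mul_neg, Matrix.neg_mul,
            Matrix.mul_assoc]
      _ = _ := by
          rw [hA.Jn_mul_inv_transpose, ← Matrix.mul_assoc A⁻¹,
            nonsing_inv_mul _ ((isUnit_iff_isUnit_det A).mp hA.isUnit), Matrix.one_mul]
          simp only [Matrix.mul_assoc]
          abel
  exact isUnit_Jn.mul_left_cancel
    (hMu.mul_right_cancel (hX.isUnit.mul_left_cancel (hP.trans hQ.symm)))

theorem conjugation_path_not_positive_general {n : ℕ} (a b : ℝ) (hab : a ≤ b)
    (A : Matrix (Fin 2 × Fin n) (Fin 2 × Fin n) ℝ)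
    (hA : Aᵀ * Jn n * A = Jn n)
    (lam : ℂ) (hlam : ‖lam‖ = 1)
    (v : Fin 2 × Fin n → ℂ) (hv : v ≠ 0)
    (heig : (A.map (fun x : ℝ => (x : ℂ))) *ᵥ v = lam • v)
    (X Y : ℝ → Matrix (Fin 2 × Fin n) (Fin 2 × Fin n) ℝ)
    (hspX : ∀ t ∈ Icc a b, (X t)ᵀ * Jn n * X t = Jn n)
    (hdX : ∀ t ∈ Icc a b, ∀ i j,
      HasDerivAt (fun s => X s i j) ((Jn n * Y t * X t) i j) t) :
    (∀ t ∈ Icc a b,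
      star v ⬝ᵥ (((-(Y t) + ((A⁻¹)ᵀ) * Y t * A⁻¹).map (fun x : ℝ => (x : ℂ))) *ᵥ v)
        = 0) ∧
    ¬ ∃ P : ℝ → Matrix (Fin 2 × Fin n) (Fin 2 × Fin n) ℝ,
        (∀ i j, ContinuousOn (fun t => P t i j) (Icc a b)) ∧
        ∀ t ∈ Icc a b, (P t)ᵀ = P t ∧ (P t).PosDef ∧
          ∀ i j, HasDerivAt (fun s => ((X s)⁻¹ * A * X s) i j)
            ((Jn n * P t * ((X t)⁻¹ * A * X t)) i j) t := by
  have hA : IsSymplectic A := hA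
  have hform :=
    star_dotProduct_map_ofReal_mulVec_eq_zero_of_norm_eigenvalue_eq_one hA.isUnit hlam heig
  refine ⟨fun t _ => hform (Y t), ?_⟩
  rintro ⟨P, -, hP⟩
  have ha : a ∈ Icc a b := left_mem_Icc.mpr hab
  obtain ⟨-, hPpos, hPderiv⟩ := hP a ha
  have hXa : IsSymplectic (X a) := hspX a ha
  have hPa : P a = (X a)ᵀ * (-Y a + A⁻¹ᵀ * Y a * A⁻¹) * X a :=
    eq_transpose_mul_mul_of_conj_deriv hA hXa
      (mul_add_mul_eq_of_hasDerivAt_inv_mul_mul (hdX a ha) hXa.isUnit hPderiv)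
  set w := (X a)⁻¹.map Complex.ofReal *ᵥ v
  have hXw : (X a).map Complex.ofReal *ᵥ w = v := by
    rw [mulVec_mulVec, ← map_ofReal_mul,
      mul_nonsing_inv _ ((isUnit_iff_isUnit_det _).mp hXa.isUnit),
      Matrix.map_one _ Complex.ofReal_zero Complex.ofReal_one, one_mulVec]
  have hw : w ≠ 0 := fun h => hv (by rw [← hXw, h, mulVec_zero])
  have hPw := hPpos.re_star_dotProduct_map_ofReal_mulVec_pos hw
  rw [hPa, star_dotProduct_map_ofReal_transpose_mul_mul_mulVec, hXw, hform] at hPw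
  exact hPw.false

/-- If `A ∈ Sp(2n)` has an eigenvalue on the unit circle, then for any `C¹` family
`X(t)` of symplectic matrices with `X' = JYX`, `Y` symmetric, the conjugated path
`t ↦ X(t)⁻¹ A X(t)` is not a positive path; moreover the Hermitian form of
`−Y + A⁻ᵀ Y A⁻¹` vanishes on any unit-circle eigenvector `v` of `A`. -/
theorem conjugation_path_not_positive {n : ℕ} (a b : ℝ) (hab : a ≤ b)
    (A : Matrix (Fin 2 × Fin n) (Fin 2 × Fin n) ℝ)
    (hA : Aᵀ * Jn n * A = Jn n)
    (lam : ℂ) (hlam : ‖lam‖ = 1)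
    (v : Fin 2 × Fin n → ℂ) (hv : v ≠ 0)
    (heig : (A.map (fun x : ℝ => (x : ℂ))) *ᵥ v = lam • v)
    (X Y : ℝ → Matrix (Fin 2 × Fin n) (Fin 2 × Fin n) ℝ)
    (hspX : ∀ t ∈ Icc a b, (X t)ᵀ * Jn n * X t = Jn n)
    (hY : ∀ t ∈ Icc a b, (Y t)ᵀ = Y t)
    (hdX : ∀ t ∈ Icc a b, ∀ i j,
      HasDerivAt (fun s => X s i j) ((Jn n * Y t * X t) i j) t) :
    (∀ t ∈ Icc a b,
      star v ⬝ᵥ (((-(Y t) + ((A⁻¹)ᵀ) * Y t * A⁻¹).map (fun x : ℝ => (x : ℂ))) *ᵥ v)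
        = 0) ∧
    ¬ ∃ P : ℝ → Matrix (Fin 2 × Fin n) (Fin 2 × Fin n) ℝ,
        (∀ i j, ContinuousOn (fun t => P t i j) (Icc a b)) ∧
        ∀ t ∈ Icc a b, (P t)ᵀ = P t ∧ (P t).PosDef ∧
          ∀ i j, HasDerivAt (fun s => ((X s)⁻¹ * A * X s) i j)
            ((Jn n * P t * ((X t)⁻¹ * A * X t)) i j) t :=
  conjugation_path_not_positive_general a b hab A hA lam hlam v hv heig X Y hspX hdX
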